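/- Many-sorted Łoś–Vaught test for completely split signatures: Suppose Σ is completely split (each sort has its own disjoint sub-signature Σ_σ), T is a Σ-theory all of whose models interpret every sort as an infinite set, and T is κ-categorical for some cardinal function κ with κ(σ) ≥ |Σ_σ| for every sort σ. Then T is complete. -/

import Mathlib

set_option autoImplicit false

/-- A many-sorted first-order signature. -/
structure MSSignature : Type 1 where
  Sorts : Type
  Func : Type
  Pred : Type
  funcDom : Func → List Sorts
  funcCod : Func → Sorts
  predDom : Pred → List Sorts

namespace MS

variable (Sg : MSSignature)

/-- Many-sorted terms; variables of each sort are indexed by naturals. -/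
inductive Term : Sg.Sorts → Type where
  | var (s : Sg.Sorts) (n : ℕ) : Term s
  | app (f : Sg.Func)
      (args : ∀ i : Fin (Sg.funcDom f).length, Term ((Sg.funcDom f).get i)) :
      Term (Sg.funcCod f)

/-- Many-sorted first-order formulas. -/
inductive Formula : Type where
  | eq {s : Sg.Sorts} (t u : Term Sg s) : Formula
  | pred (P : Sg.Pred)
      (args : ∀ i : Fin (Sg.predDom P).length, Term Sg ((Sg.predDom P).get i)) : Formula
  | falsum : Formula
  | imp (φ ψ : Formula) : Formula
  | all (s : Sg.Sorts) (n : ℕ) (φ : Formula) : Formula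

/-- A structure for a many-sorted signature: each sort gets a nonempty domain. -/
structure Structure : Type 1 where
  dom : Sg.Sorts → Type
  dom_nonempty : ∀ s, Nonempty (dom s)
  interpFunc : ∀ f : Sg.Func,
    (∀ i : Fin (Sg.funcDom f).length, dom ((Sg.funcDom f).get i)) → dom (Sg.funcCod f)
  interpPred : ∀ P : Sg.Pred,
    (∀ i : Fin (Sg.predDom P).length, dom ((Sg.predDom P).get i)) → Prop

variable {Sg}

/-- Variable assignments. -/
def Assign (A : Structure Sg) : Type := ∀ s : Sg.Sorts, ℕ → A.dom s

open Classical in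
noncomputable
def Assign.update {A : Structure Sg} (ν : Assign A) (s : Sg.Sorts) (n : ℕ) (a : A.dom s) :
    Assign A := fun t m =>
  if h : s = t then (if m = n then h ▸ a else ν t m) else ν t m

def Term.eval {A : Structure Sg} (ν : Assign A) : ∀ {s : Sg.Sorts}, Term Sg s → A.dom s
  | _, .var s n => ν s n
  | _, .app f args => A.interpFunc f fun i => Term.eval ν (args i)

/-- Tarskian satisfaction. -/
def Sat (A : Structure Sg) (ν : Assign A) : Formula Sg → Prop
  | .eq t u => t.eval ν = u.eval ν
  | .pred P args => A.interpPred P fun i => (args i).eval ν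
  | .falsum => False
  | .imp φ ψ => Sat A ν φ → Sat A ν ψ
  | .all s n φ => ∀ a : A.dom s, Sat A (ν.update s n a) φ

/-- Derived connectives. -/
def Formula.not (φ : Formula Sg) : Formula Sg := .imp φ .falsum
def Formula.and (φ ψ : Formula Sg) : Formula Sg := (Formula.imp φ ψ.not).not
def Formula.or (φ ψ : Formula Sg) : Formula Sg := .imp φ.not ψ
def Formula.ex (s : Sg.Sorts) (n : ℕ) (φ : Formula Sg) : Formula Sg :=
  ((Formula.all s n φ.not)).not
def Formula.andList : List (Formula Sg) → Formula Sg :=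
  List.foldr Formula.and (Formula.not .falsum)
def Formula.orList : List (Formula Sg) → Formula Sg :=
  List.foldr Formula.or .falsum

/-- Occurrence of variable `(s, n)` in a term. -/
def Term.varOccurs (s : Sg.Sorts) (n : ℕ) : ∀ {t : Sg.Sorts}, Term Sg t → Prop
  | _, .var s' n' => s = s' ∧ n = n'
  | _, .app _ args => ∃ i, Term.varOccurs s n (args i)

/-- Free occurrence of variable `(s, n)` in a formula. -/
def Formula.varFree (s : Sg.Sorts) (n : ℕ) : Formula Sg → Prop
  | .eq t u => t.varOccurs s n ∨ u.varOccurs s n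
  | .pred _ args => ∃ i, (args i).varOccurs s n
  | .falsum => False
  | .imp φ ψ => φ.varFree s n ∨ ψ.varFree s n
  | .all s' n' φ => φ.varFree s n ∧ ¬(s = s' ∧ n = n')

def Formula.IsSentence (φ : Formula Sg) : Prop := ∀ s n, ¬ φ.varFree s n

/-- Quantifier-free formulas. -/
def Formula.IsQF : Formula Sg → Prop
  | .eq _ _ => True
  | .pred _ _ => True
  | .falsum => True
  | .imp φ ψ => φ.IsQF ∧ ψ.IsQF
  | .all _ _ _ => False

/-- A structure is a model of a set of formulas (a theory) if it satisfies
every axiom under every assignment. -/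
def Models (A : Structure Sg) (T : Set (Formula Sg)) : Prop :=
  ∀ φ ∈ T, ∀ ν : Assign A, Sat A ν φ

/-- Elementary equivalence: same sentences hold. -/
def ElemEquiv (A B : Structure Sg) : Prop :=
  ∀ φ : Formula Sg, φ.IsSentence →
    ((∀ ν : Assign A, Sat A ν φ) ↔ (∀ ν : Assign B, Sat B ν φ))

/-- Substructures: sort-wise subsets closed under the functions. -/
structure Substructure (A : Structure Sg) : Type 1 where
  carrier : ∀ s : Sg.Sorts, Set (A.dom s)
  carrier_nonempty : ∀ s, (carrier s).Nonempty
  closed : ∀ (f : Sg.Func)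
    (args : ∀ i : Fin (Sg.funcDom f).length, A.dom ((Sg.funcDom f).get i)),
    (∀ i, args i ∈ carrier _) → A.interpFunc f args ∈ carrier _

/-- The induced structure on a substructure. -/
def Substructure.toStructure {A : Structure Sg} (B : Substructure A) : Structure Sg where
  dom s := ↥(B.carrier s)
  dom_nonempty s := ⟨⟨(B.carrier_nonempty s).choose, (B.carrier_nonempty s).choose_spec⟩⟩
  interpFunc f args :=
    ⟨A.interpFunc f fun i => (args i).1, B.closed f _ fun i => (args i).2⟩
  interpPred P args := A.interpPred P fun i => (args i).1

/-- View an assignment into a substructure as an assignment into the ambient structure. -/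
def Substructure.amb {A : Structure Sg} (B : Substructure A)
    (ν : Assign B.toStructure) : Assign A := fun s n => (ν s n).1

/-- `B` is an elementary substructure of `A`. -/
def Substructure.IsElementary {A : Structure Sg} (B : Substructure A) : Prop :=
  ∀ (φ : Formula Sg) (ν : Assign B.toStructure),
    Sat B.toStructure ν φ ↔ Sat A (B.amb ν) φ

/-- Isomorphisms of structures. -/
structure Iso (A B : Structure Sg) : Type 1 where
  toEquiv : ∀ s, A.dom s ≃ B.dom s
  map_func : ∀ (f : Sg.Func) args,
    toEquiv _ (A.interpFunc f args) = B.interpFunc f (fun i => toEquiv _ (args i))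
  map_pred : ∀ (P : Sg.Pred) args,
    A.interpPred P args ↔ B.interpPred P (fun i => toEquiv _ (args i))

end MS

/-- The cardinality of a signature: sorts + function symbols + predicate symbols. -/
noncomputable def MSSignature.card (Sg : MSSignature) : Cardinal :=
  Cardinal.mk Sg.Sorts + Cardinal.mk Sg.Func + Cardinal.mk Sg.Pred

/-- A countable signature. -/
def MSSignature.IsCountable (Sg : MSSignature) : Prop :=
  Countable Sg.Sorts ∧ Countable Sg.Func ∧ Countable Sg.Pred

namespace MS

variable {Sg : MSSignature}

/-- A splitting of a signature by a partition `Λ` of its sorts: every function and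
predicate symbol uses sorts from a single part only. -/
structure Split (Sg : MSSignature) (Λ : Type) where
  sortPart : Sg.Sorts → Λ
  funcPart : Sg.Func → Λ
  predPart : Sg.Pred → Λ
  func_dom : ∀ (f : Sg.Func) (i : Fin (Sg.funcDom f).length),
    sortPart ((Sg.funcDom f).get i) = funcPart f
  func_cod : ∀ f : Sg.Func, sortPart (Sg.funcCod f) = funcPart f
  pred_dom : ∀ (P : Sg.Pred) (i : Fin (Sg.predDom P).length),
    sortPart ((Sg.predDom P).get i) = predPart P

/-- A term lies in the sub-signature `Σ_l`. -/
def Term.inPart {Λ : Type} (sp : Split Sg Λ) (l : Λ) :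
    ∀ {s : Sg.Sorts}, Term Sg s → Prop
  | s, .var _ _ => sp.sortPart s = l
  | _, .app f args => sp.funcPart f = l ∧ ∀ i, Term.inPart sp l (args i)

/-- A formula lies in the sub-signature `Σ_l`: all its symbols and the sorts of all
its variables belong to the part `l`. -/
def Formula.inPart {Λ : Type} (sp : Split Sg Λ) (l : Λ) : Formula Sg → Prop
  | .eq (s := s) t u => sp.sortPart s = l ∧ t.inPart sp l ∧ u.inPart sp l
  | .pred P args => sp.predPart P = l ∧ ∀ i, (args i).inPart sp l
  | .falsum => True
  | .imp φ ψ => φ.inPart sp l ∧ ψ.inPart sp l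
  | .all s _ φ => sp.sortPart s = l ∧ φ.inPart sp l

/-- A generalized `Λ`-cube: a conjunction of formulas, each over a single
sub-signature, with pairwise distinct parts. -/
def Formula.IsGenCube {Λ : Type} (sp : Split Sg Λ) (φ : Formula Sg) : Prop :=
  ∃ L : List (Λ × Formula Sg), (L.map Prod.fst).Nodup ∧
    (∀ p ∈ L, (p.2).inPart sp p.1) ∧ φ = Formula.andList (L.map Prod.snd)

/-- A generalized `Λ`-clause: a disjunction of formulas, each over a single
sub-signature, with pairwise distinct parts. -/
def Formula.IsGenClause {Λ : Type} (sp : Split Sg Λ) (φ : Formula Sg) : Prop :=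
  ∃ L : List (Λ × Formula Sg), (L.map Prod.fst).Nodup ∧
    (∀ p ∈ L, (p.2).inPart sp p.1) ∧ φ = Formula.orList (L.map Prod.snd)

/-- Generalized disjunctive normal form: a disjunction of generalized cubes. -/
def Formula.IsGDNF {Λ : Type} (sp : Split Sg Λ) (φ : Formula Sg) : Prop :=
  ∃ L : List (Formula Sg), (∀ ψ ∈ L, ψ.IsGenCube sp) ∧ φ = Formula.orList L

/-- Generalized conjunctive normal form: a conjunction of generalized clauses. -/
def Formula.IsGCNF {Λ : Type} (sp : Split Sg Λ) (φ : Formula Sg) : Prop :=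
  ∃ L : List (Formula Sg), (∀ ψ ∈ L, ψ.IsGenClause sp) ∧ φ = Formula.andList L

/-- Logical equivalence of many-sorted formulas. -/
def LogEquiv (φ ψ : Formula Sg) : Prop :=
  ∀ (A : Structure Sg) (ν : Assign A), Sat A ν φ ↔ Sat A ν ψ

/-- The cardinality of the sub-signature `Σ_l` determined by a splitting. -/
noncomputable def Split.partCard {Λ : Type} (sp : Split Sg Λ) (l : Λ) : Cardinal :=
  Cardinal.mk {s : Sg.Sorts // sp.sortPart s = l} +
    Cardinal.mk {f : Sg.Func // sp.funcPart f = l} +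
    Cardinal.mk {P : Sg.Pred // sp.predPart P = l}

end MS

open MS Cardinal

namespace MS

/-- `T` is `κ`-categorical: there is exactly one model (up to isomorphism) whose
sort cardinalities are given by `κ`. -/
def Categorical {Sg : MSSignature} (T : Set (Formula Sg))
    (κ : Sg.Sorts → Cardinal) : Prop :=
  (∃ A : Structure Sg, Models A T ∧ ∀ s, #(A.dom s) = κ s) ∧
    ∀ A B : Structure Sg, Models A T → Models B T →
      (∀ s, #(A.dom s) = κ s) → (∀ s, #(B.dom s) = κ s) → Nonempty (Iso A B)

/-- `T` is complete: every sentence is entailed or refuted by `T`. -/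
def Complete {Sg : MSSignature} (T : Set (Formula Sg)) : Prop :=
  ∀ φ : Formula Sg, φ.IsSentence →
    (∀ A : Structure Sg, Models A T → ∀ ν : Assign A, Sat A ν φ) ∨
    (∀ A : Structure Sg, Models A T → ∀ ν : Assign A, ¬ Sat A ν φ)

end MS

/-!
Because the signature splits, every formula is equivalent to a Boolean combination of formulas
each living in a single part, with no new free variables (a Feferman–Vaught decomposition).
Under a quantifier over a sort `s`, the atoms from other parts do not mention the bound
variable, so one cases on their truth values and quantifies only the combination of the atoms
of the part of `s`, which is again a single-part formula. Hence two structures are elementarily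
equivalent as soon as they satisfy the same single-part sentences.

For a completely split signature every part is a one-sorted structure on a single sort, so the
one-sorted Löwenheim–Skolem theorem resizes each sort independently to cardinality `κ s`
without changing its theory. Thus every model of `T` is elementarily equivalent to a model with
sort cardinalities `κ`; these are all isomorphic by categoricity, so any two models of `T` are
elementarily equivalent, which is completeness.
-/

namespace FirstOrder.Language

variable {L : Language} {M N : Type*} [L.Structure M] [L.Structure N] {α : Type*}

theorem Formula.exists_realize_iff_realize_exClosure [DecidableEq α] [Nonempty M]
    (ψ : L.Formula α) : (∃ v : α → M, ψ.Realize v) ↔ M ⊨ ψ.exClosure := by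
  rw [Formula.realize_exClosure]
  constructor
  · rintro ⟨v, hv⟩
    exact ⟨fun a => v a,
      (BoundedFormula.realize_restrictFreeVar (f := id) (v := fun a : ψ.freeVarFinset => v a) v
        fun _ => rfl).2 hv⟩
  · rintro ⟨w, hw⟩
    refine ⟨fun a => if h : a ∈ ψ.freeVarFinset then w ⟨a, h⟩ else Classical.arbitrary M, ?_⟩
    exact (BoundedFormula.realize_restrictFreeVar _ fun a => by simp [a.2]).1 hw

theorem Formula.forall_realize_iff_not_realize_exClosure_not [DecidableEq α] [Nonempty M]
    (ψ : L.Formula α) : (∀ v : α → M, ψ.Realize v) ↔ ¬ M ⊨ ψ.not.exClosure := by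
  rw [← Formula.exists_realize_iff_realize_exClosure]
  simp [Formula.realize_not]

theorem ElementarilyEquivalent.forall_realize_formula_iff [Nonempty M] [Nonempty N]
    (h : M ≅[L] N) (ψ : L.Formula α) :
    (∀ v : α → M, ψ.Realize v) ↔ ∀ v : α → N, ψ.Realize v := by
  classical
  rw [Formula.forall_realize_iff_not_realize_exClosure_not,
    Formula.forall_realize_iff_not_realize_exClosure_not, h.realize_sentence]

end FirstOrder.Language

namespace MS

variable {Sg : MSSignature}

section Satisfaction

variable {A : Structure Sg} {ν : Assign A} {φ ψ : Formula Sg}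

theorem sat_not : Sat A ν φ.not ↔ ¬ Sat A ν φ := Iff.rfl

theorem sat_and : Sat A ν (φ.and ψ) ↔ Sat A ν φ ∧ Sat A ν ψ := by
  simp only [Formula.and, sat_not, Sat]
  tauto

theorem sat_or : Sat A ν (φ.or ψ) ↔ Sat A ν φ ∨ Sat A ν ψ := by
  simp only [Formula.or, sat_not, Sat]
  tauto

theorem sat_andList {L : List (Formula Sg)} :
    Sat A ν (Formula.andList L) ↔ ∀ φ ∈ L, Sat A ν φ := by
  induction L with
  | nil => simp [Formula.andList, sat_not, Sat]
  | cons φ L ih => simp [Formula.andList, sat_and, ← ih]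

theorem sat_orList {L : List (Formula Sg)} :
    Sat A ν (Formula.orList L) ↔ ∃ φ ∈ L, Sat A ν φ := by
  induction L with
  | nil => simp [Formula.orList, Sat]
  | cons φ L ih => simp [Formula.orList, sat_or, ← ih]

section FreeVariables

variable {s : Sg.Sorts} {n : ℕ}

theorem varFree_not : φ.not.varFree s n ↔ φ.varFree s n := by
  simp [Formula.not, Formula.varFree]

theorem varFree_and : (φ.and ψ).varFree s n ↔ φ.varFree s n ∨ ψ.varFree s n := by
  simp [Formula.and, Formula.not, Formula.varFree]

theorem varFree_or : (φ.or ψ).varFree s n ↔ φ.varFree s n ∨ ψ.varFree s n := by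
  simp [Formula.or, Formula.not, Formula.varFree]

theorem varFree_andList {L : List (Formula Sg)} :
    (Formula.andList L).varFree s n ↔ ∃ φ ∈ L, φ.varFree s n := by
  induction L with
  | nil => simp [Formula.andList, Formula.not, Formula.varFree]
  | cons φ L ih => simp [Formula.andList, varFree_and, ← ih]

theorem varFree_orList {L : List (Formula Sg)} :
    (Formula.orList L).varFree s n ↔ ∃ φ ∈ L, φ.varFree s n := by
  induction L with
  | nil => simp [Formula.orList, Formula.varFree]
  | cons φ L ih => simp [Formula.orList, varFree_or, ← ih]

end FreeVariables

section InPart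

variable {Λ : Type} {sp : Split Sg Λ} {l : Λ}

theorem inPart_not (h : φ.inPart sp l) : φ.not.inPart sp l := ⟨h, trivial⟩

theorem inPart_and (hφ : φ.inPart sp l) (hψ : ψ.inPart sp l) : (φ.and ψ).inPart sp l :=
  ⟨⟨hφ, hψ, trivial⟩, trivial⟩

theorem inPart_or (hφ : φ.inPart sp l) (hψ : ψ.inPart sp l) : (φ.or ψ).inPart sp l :=
  ⟨⟨hφ, trivial⟩, hψ⟩

theorem inPart_andList {L : List (Formula Sg)} (h : ∀ φ ∈ L, φ.inPart sp l) :
    (Formula.andList L).inPart sp l := by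
  induction L with
  | nil => exact ⟨trivial, trivial⟩
  | cons φ L ih => exact inPart_and (h φ (by simp)) (ih fun ψ hψ => h ψ (by simp [hψ]))

theorem inPart_orList {L : List (Formula Sg)} (h : ∀ φ ∈ L, φ.inPart sp l) :
    (Formula.orList L).inPart sp l := by
  induction L with
  | nil => trivial
  | cons φ L ih => exact inPart_or (h φ (by simp)) (ih fun ψ hψ => h ψ (by simp [hψ]))

end InPart

section Assignments

instance (A : Structure Sg) : Nonempty (Assign A) := ⟨fun s _ => (A.dom_nonempty s).some⟩

theorem Assign.update_apply_same (ν : Assign A) (s : Sg.Sorts) (n : ℕ) (a : A.dom s) (m : ℕ) :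
    ν.update s n a s m = if m = n then a else ν s m := by
  simp [Assign.update]

theorem Assign.update_apply_of_ne (ν : Assign A) {s t : Sg.Sorts} {n m : ℕ} (a : A.dom s)
    (h : ¬(t = s ∧ m = n)) : ν.update s n a t m = ν t m := by
  by_cases hst : s = t
  · subst hst
    simp_all [Assign.update]
  · simp [Assign.update, hst]

theorem Term.eval_congr {ν ν' : Assign A} :
    ∀ {t : Sg.Sorts} (tm : Term Sg t),
      (∀ s n, tm.varOccurs s n → ν s n = ν' s n) → tm.eval ν = tm.eval ν'
  | _, .var s n, h => h s n ⟨rfl, rfl⟩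
  | _, .app f args, h => by
    simp only [Term.eval]
    congr 1
    funext i
    exact eval_congr (args i) fun s n hocc => h s n ⟨i, hocc⟩

theorem sat_congr :
    ∀ (φ : Formula Sg) {ν ν' : Assign A},
      (∀ s n, φ.varFree s n → ν s n = ν' s n) → (Sat A ν φ ↔ Sat A ν' φ)
  | .eq t u, ν, ν', h => by
    simp only [Sat]
    rw [t.eval_congr fun s n ho => h s n (.inl ho), u.eval_congr fun s n ho => h s n (.inr ho)]
  | .pred P args, ν, ν', h => by
    simp only [Sat]
    rw [funext fun i => (args i).eval_congr fun s n ho => h s n ⟨i, ho⟩]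
  | .falsum, _, _, _ => Iff.rfl
  | .imp φ ψ, ν, ν', h => by
    simp only [Sat]
    rw [sat_congr φ fun s n hf => h s n (.inl hf), sat_congr ψ fun s n hf => h s n (.inr hf)]
  | .all s' n' φ, ν, ν', h => by
    refine forall_congr' fun a => sat_congr φ fun s n hf => ?_
    by_cases hc : s = s' ∧ n = n'
    · obtain ⟨rfl, rfl⟩ := hc
      simp [Assign.update_apply_same]
    · rw [Assign.update_apply_of_ne _ _ hc, Assign.update_apply_of_ne _ _ hc]
      exact h s n ⟨hf, hc⟩

theorem Formula.IsSentence.sat_iff (hφ : φ.IsSentence) (ν' : Assign A) :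
    Sat A ν φ ↔ Sat A ν' φ :=
  sat_congr φ fun s n hf => absurd hf (hφ s n)

theorem Formula.IsSentence.forall_sat_iff (hφ : φ.IsSentence) (ν : Assign A) :
    (∀ ν', Sat A ν' φ) ↔ Sat A ν φ :=
  ⟨fun h => h ν, fun h ν' => (hφ.sat_iff ν').1 h⟩

end Assignments

end Satisfaction

section Isomorphisms

variable {A B : Structure Sg}

def Iso.mapAssign (e : Iso A B) (ν : Assign A) : Assign B := fun s n => e.toEquiv s (ν s n)

theorem Iso.mapAssign_update (e : Iso A B) (ν : Assign A) (s : Sg.Sorts) (n : ℕ) (a : A.dom s) :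
    e.mapAssign (ν.update s n a) = (e.mapAssign ν).update s n (e.toEquiv s a) := by
  funext t m
  by_cases hst : s = t
  · subst hst
    by_cases hm : m = n <;> simp [Iso.mapAssign, Assign.update, hm]
  · simp [Iso.mapAssign, Assign.update, hst]

theorem Iso.mapAssign_surjective (e : Iso A B) : Function.Surjective e.mapAssign := fun ν =>
  ⟨fun s n => (e.toEquiv s).symm (ν s n), by funext s n; simp [Iso.mapAssign]⟩

theorem Iso.eval_mapAssign (e : Iso A B) (ν : Assign A) :
    ∀ {t : Sg.Sorts} (tm : Term Sg t), tm.eval (e.mapAssign ν) = e.toEquiv t (tm.eval ν)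
  | _, .var _ _ => rfl
  | _, .app f args => by
    simp only [Term.eval, e.map_func]
    congr 1
    funext i
    exact Iso.eval_mapAssign e ν (args i)

theorem Iso.sat_iff (e : Iso A B) :
    ∀ (φ : Formula Sg) (ν : Assign A), Sat A ν φ ↔ Sat B (e.mapAssign ν) φ
  | .eq t u, ν => by
    simp only [Sat, e.eval_mapAssign, (e.toEquiv _).apply_eq_iff_eq]
  | .pred P args, ν => by
    simp only [Sat, e.eval_mapAssign]
    exact e.map_pred P _
  | .falsum, _ => Iff.rfl
  | .imp φ ψ, ν => imp_congr (Iso.sat_iff e φ ν) (Iso.sat_iff e ψ ν)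
  | .all s n φ, ν => (e.toEquiv s).forall_congr fun a => by
    rw [Iso.sat_iff e φ, e.mapAssign_update]

theorem Iso.elemEquiv (e : Iso A B) : ElemEquiv A B := fun φ _ =>
  ⟨fun h ν => by
    obtain ⟨ν, rfl⟩ := e.mapAssign_surjective ν
    exact (e.sat_iff φ ν).1 (h ν),
   fun h ν => (e.sat_iff φ ν).2 (h _)⟩

end Isomorphisms

section ElementaryEquivalence

variable {A B C : Structure Sg}

theorem ElemEquiv.symm (h : ElemEquiv A B) : ElemEquiv B A := fun φ hφ => (h φ hφ).symm

theorem ElemEquiv.trans (h : ElemEquiv A B) (h' : ElemEquiv B C) : ElemEquiv A C :=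
  fun φ hφ => (h φ hφ).trans (h' φ hφ)

theorem ElemEquiv.models_iff (h : ElemEquiv A B) {T : Set (Formula Sg)}
    (hT : ∀ φ ∈ T, φ.IsSentence) : Models A T ↔ Models B T :=
  forall₂_congr fun φ hφ => h φ (hT φ hφ)

theorem complete_of_forall_elemEquiv {T : Set (Formula Sg)}
    (h : ∀ A B : Structure Sg, Models A T → Models B T → ElemEquiv A B) : Complete T := by
  intro φ hφ
  by_cases htrue : ∀ A : Structure Sg, Models A T → ∀ ν, Sat A ν φ
  · exact .inl htrue
  push Not at htrue
  obtain ⟨B, hB, ν₀, hν₀⟩ := htrue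
  exact .inr fun A hA ν hν => hν₀ ((h A B hA hB φ hφ).1 ((hφ.forall_sat_iff ν).2 hν) ν₀)

end ElementaryEquivalence

section Decomposition

variable {Λ : Type}

section Parts

variable {sp : Split Sg Λ}

theorem Term.inPart_sortPart : ∀ {t : Sg.Sorts} (tm : Term Sg t), tm.inPart sp (sp.sortPart t)
  | _, .var _ _ => rfl
  | _, .app f args => ⟨(sp.func_cod f).symm, fun i =>
      (sp.func_dom f i).trans (sp.func_cod f).symm ▸ (args i).inPart_sortPart⟩

theorem Formula.inPart_eq {s : Sg.Sorts} (t u : Term Sg s) :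
    (Formula.eq t u).inPart sp (sp.sortPart s) :=
  ⟨rfl, t.inPart_sortPart, u.inPart_sortPart⟩

theorem Formula.inPart_pred (P : Sg.Pred)
    (args : ∀ i : Fin (Sg.predDom P).length, Term Sg ((Sg.predDom P).get i)) :
    (Formula.pred P args).inPart sp (sp.predPart P) :=
  ⟨rfl, fun i => sp.pred_dom P i ▸ (args i).inPart_sortPart⟩

theorem Term.sortPart_eq_of_varOccurs {l : Λ} {s : Sg.Sorts} {n : ℕ} :
    ∀ {t : Sg.Sorts} {tm : Term Sg t}, tm.inPart sp l → tm.varOccurs s n → sp.sortPart s = l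
  | _, .var _ _, hin, hocc => hocc.1 ▸ hin
  | _, .app _ args, hin, hocc => by
    obtain ⟨i, hocc⟩ := hocc
    exact sortPart_eq_of_varOccurs (hin.2 i) hocc

theorem Formula.sortPart_eq_of_varFree {l : Λ} {s : Sg.Sorts} {n : ℕ} :
    ∀ {φ : Formula Sg}, φ.inPart sp l → φ.varFree s n → sp.sortPart s = l
  | .eq _ _, hin, .inl hocc => Term.sortPart_eq_of_varOccurs hin.2.1 hocc
  | .eq _ _, hin, .inr hocc => Term.sortPart_eq_of_varOccurs hin.2.2 hocc
  | .pred _ _, hin, ⟨i, hocc⟩ => Term.sortPart_eq_of_varOccurs (hin.2 i) hocc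
  | .imp _ _, hin, .inl hf => sortPart_eq_of_varFree hin.1 hf
  | .imp _ _, hin, .inr hf => sortPart_eq_of_varFree hin.2 hf
  | .all _ _ _, hin, hf => sortPart_eq_of_varFree hin.2 hf.1

theorem sat_update_iff_of_inPart {A : Structure Sg} (ν : Assign A) {φ : Formula Sg} {l : Λ}
    (hφ : φ.inPart sp l) {s : Sg.Sorts} (hs : sp.sortPart s ≠ l) (n : ℕ) (a : A.dom s) :
    Sat A (ν.update s n a) φ ↔ Sat A ν φ :=
  sat_congr φ fun _ _ hf => Assign.update_apply_of_ne ν a fun h =>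
    hs (h.1 ▸ Formula.sortPart_eq_of_varFree hφ hf)

end Parts

section BooleanCombinations

variable {sp : Split Sg Λ} {ι : Type} [Finite ι]

open Classical in
noncomputable def Formula.boolCombination (ψ : ι → Formula Sg) (f : (ι → Prop) → Prop) :
    Formula Sg :=
  have := Fintype.ofFinite ι
  Formula.orList <| (Finset.univ.filter fun σ : ι → Bool => f fun i => σ i).toList.map fun σ =>
    Formula.andList <| Finset.univ.toList.map fun i => if σ i then ψ i else (ψ i).not

theorem sat_boolCombination {A : Structure Sg} {ν : Assign A} (ψ : ι → Formula Sg)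
    (f : (ι → Prop) → Prop) :
    Sat A ν (Formula.boolCombination ψ f) ↔ f fun i => Sat A ν (ψ i) := by
  have hlit : ∀ (σ : ι → Bool) i, Sat A ν (if σ i then ψ i else (ψ i).not) ↔
      (σ i = true ↔ Sat A ν (ψ i)) := by
    intro σ i
    cases σ i <;> simp [sat_not]
  simp only [Formula.boolCombination, sat_orList, sat_andList, List.mem_map,
    exists_exists_and_eq_and, forall_exists_index, forall_apply_eq_imp_iff, Finset.mem_toList,
    Finset.mem_filter, Finset.mem_univ, true_and, hlit]
  constructor
  · rintro ⟨σ, hσ, hsat⟩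
    rwa [← funext fun i => propext (hsat i)]
  · intro hf
    classical
    exact ⟨fun i => decide (Sat A ν (ψ i)), by simpa using hf, by simp⟩

theorem inPart_boolCombination {ψ : ι → Formula Sg} {l : Λ} (hψ : ∀ i, (ψ i).inPart sp l)
    (f : (ι → Prop) → Prop) : (Formula.boolCombination ψ f).inPart sp l := by
  refine inPart_orList ?_
  simp only [List.mem_map]
  rintro _ ⟨σ, -, rfl⟩
  refine inPart_andList ?_
  simp only [List.mem_map]
  rintro _ ⟨i, -, rfl⟩
  split
  · exact hψ i
  · exact inPart_not (hψ i)

theorem varFree_boolCombination {ψ : ι → Formula Sg} {f : (ι → Prop) → Prop} {s : Sg.Sorts}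
    {n : ℕ} (h : (Formula.boolCombination ψ f).varFree s n) : ∃ i, (ψ i).varFree s n := by
  simp only [Formula.boolCombination, varFree_orList, varFree_andList, List.mem_map,
    exists_exists_and_eq_and] at h
  obtain ⟨σ, -, i, -, hi⟩ := h
  refine ⟨i, ?_⟩
  split at hi
  · exact hi
  · exact varFree_not.1 hi

end BooleanCombinations

structure PartDecomposition (sp : Split Sg Λ) (φ : Formula Sg) : Type 1 where
  ι : Type
  [finite : Finite ι]
  part : ι → Λ
  atom : ι → Formula Sg
  atom_inPart : ∀ i, (atom i).inPart sp (part i)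
  varFree_of_varFree_atom : ∀ i s n, (atom i).varFree s n → φ.varFree s n
  comb : (ι → Prop) → Prop
  sat_iff : ∀ (A : Structure Sg) (ν : Assign A), Sat A ν φ ↔ comb fun i => Sat A ν (atom i)

attribute [instance] PartDecomposition.finite

namespace PartDecomposition

variable {sp : Split Sg Λ} {φ ψ : Formula Sg}

def ofInPart {l : Λ} (h : φ.inPart sp l) : PartDecomposition sp φ where
  ι := Unit
  part _ := l
  atom _ := φ
  atom_inPart _ := h
  varFree_of_varFree_atom _ _ _ hf := hf
  comb v := v ()
  sat_iff _ _ := Iff.rfl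

def falsum : PartDecomposition sp Formula.falsum where
  ι := Empty
  part := Empty.elim
  atom := Empty.elim
  atom_inPart := fun i => i.elim
  varFree_of_varFree_atom := fun i => i.elim
  comb _ := False
  sat_iff _ _ := Iff.rfl

def imp (D : PartDecomposition sp φ) (E : PartDecomposition sp ψ) :
    PartDecomposition sp (φ.imp ψ) where
  ι := D.ι ⊕ E.ι
  part := Sum.elim D.part E.part
  atom := Sum.elim D.atom E.atom
  atom_inPart := Sum.rec D.atom_inPart E.atom_inPart
  varFree_of_varFree_atom
    | .inl i, s, n, hf => .inl (D.varFree_of_varFree_atom i s n hf)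
    | .inr i, s, n, hf => .inr (E.varFree_of_varFree_atom i s n hf)
  comb v := D.comb (fun i => v (.inl i)) → E.comb fun i => v (.inr i)
  sat_iff A ν := imp_congr (D.sat_iff A ν) (E.sat_iff A ν)

variable (D : PartDecomposition sp φ)

open Classical in
/-- The combination of the atoms of part `l`, with the truth values of all other atoms
frozen to `β`. -/
noncomputable def fiber (l : Λ) (β : {i // D.part i ≠ l} → Bool) : Formula Sg :=
  Formula.boolCombination (fun j : {i // D.part i = l} => D.atom j)
    fun v => D.comb fun i => if h : D.part i = l then v ⟨i, h⟩ else β ⟨i, h⟩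

theorem inPart_fiber (l : Λ) (β : {i // D.part i ≠ l} → Bool) : (D.fiber l β).inPart sp l :=
  inPart_boolCombination (fun j : {i // D.part i = l} =>
    (congrArg (Formula.inPart sp · (D.atom j)) j.2).mp (D.atom_inPart j)) _

open Classical in
/-- Atoms outside the part of `s` do not mention the variable `(s, n)`, so under `∀ (s, n)`
their truth values are constants. -/
theorem sat_all_iff_sat_all_fiber {A : Structure Sg} (ν : Assign A) (s : Sg.Sorts) (n : ℕ) :
    Sat A ν (.all s n φ) ↔
      Sat A ν (.all s n (D.fiber (sp.sortPart s) fun o => decide (Sat A ν (D.atom o)))) := by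
  refine forall_congr' fun a => ?_
  rw [D.sat_iff, fiber, sat_boolCombination]
  refine iff_of_eq (congrArg D.comb (funext fun i => ?_))
  split_ifs with h
  · rfl
  · simp [sat_update_iff_of_inPart ν (D.atom_inPart i) (Ne.symm h)]

open Classical in
noncomputable def all (s : Sg.Sorts) (n : ℕ) : PartDecomposition sp (.all s n φ) where
  ι := {i // D.part i ≠ sp.sortPart s} ⊕ ({i // D.part i ≠ sp.sortPart s} → Bool)
  part := Sum.elim (fun o => D.part o) fun _ => sp.sortPart s
  atom := Sum.elim (fun o => D.atom o) fun β => .all s n (D.fiber _ β)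
  atom_inPart
    | .inl o => D.atom_inPart o
    | .inr β => ⟨rfl, D.inPart_fiber _ β⟩
  varFree_of_varFree_atom
    | .inl o, _, _, hf => ⟨D.varFree_of_varFree_atom o _ _ hf,
        fun h => o.2 (h.1 ▸ Formula.sortPart_eq_of_varFree (D.atom_inPart o) hf).symm⟩
    | .inr _, _, _, hf =>
      ⟨(varFree_boolCombination hf.1).elim fun j hj => D.varFree_of_varFree_atom j _ _ hj, hf.2⟩
  comb v := ∃ β, (∀ o, β o = true ↔ v (.inl o)) ∧ v (.inr β)
  sat_iff A ν := by
    rw [D.sat_all_iff_sat_all_fiber ν]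
    constructor
    · exact fun h => ⟨_, fun o => decide_eq_true_iff, h⟩
    · rintro ⟨β, hβ, h⟩
      obtain rfl : β = fun o : {i // D.part i ≠ sp.sortPart s} => decide (Sat A ν (D.atom o)) :=
        funext fun o => Bool.eq_iff_iff.2 ((hβ o).trans decide_eq_true_iff.symm)
      exact h

end PartDecomposition

noncomputable def Formula.partDecomposition (sp : Split Sg Λ) :
    ∀ φ : Formula Sg, PartDecomposition sp φ
  | .eq t u => .ofInPart (Formula.inPart_eq t u)
  | .pred P args => .ofInPart (Formula.inPart_pred P args)
  | .falsum => .falsum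
  | .imp φ ψ => (φ.partDecomposition sp).imp (ψ.partDecomposition sp)
  | .all s n φ => (φ.partDecomposition sp).all s n

theorem elemEquiv_of_forall_inPart (sp : Split Sg Λ) {A B : Structure Sg}
    (h : ∀ (l : Λ) (ψ : Formula Sg), ψ.inPart sp l → ψ.IsSentence →
      ((∀ ν : Assign A, Sat A ν ψ) ↔ ∀ ν : Assign B, Sat B ν ψ)) :
    ElemEquiv A B := by
  intro φ hφ
  let D := φ.partDecomposition sp
  have hatom : ∀ i, (D.atom i).IsSentence := fun i s n hf =>
    hφ s n (D.varFree_of_varFree_atom i s n hf)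
  have hcomb : ∀ X : Structure Sg,
      (∀ ν : Assign X, Sat X ν φ) ↔ D.comb fun i => ∀ ν : Assign X, Sat X ν (D.atom i) := by
    intro X
    obtain ⟨ν⟩ : Nonempty (Assign X) := inferInstance
    rw [hφ.forall_sat_iff ν, D.sat_iff]
    simp only [(hatom _).forall_sat_iff ν]
  rw [hcomb A, hcomb B, funext fun i => propext (h _ _ (D.atom_inPart i) (hatom i))]

end Decomposition

section OneSorted

open FirstOrder

section Casts

variable {D : Sg.Sorts → Type} {a b : Sg.Sorts}

def dcast (h : a = b) (x : D a) : D b := h ▸ x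

@[simp] theorem dcast_rfl (x : D a) : dcast (D := D) rfl x = x := rfl

@[simp] theorem dcast_dcast (h : a = b) (h' : b = a) (x : D a) :
    dcast (D := D) h' (dcast h x) = x := by
  cases h
  rfl

end Casts

variable (sp : Split Sg Sg.Sorts)

theorem Split.funcDom_get (hsplit : sp.sortPart = id) (f : Sg.Func)
    (i : Fin (Sg.funcDom f).length) : (Sg.funcDom f).get i = Sg.funcCod f := by
  simpa [hsplit] using (sp.func_dom f i).trans (sp.func_cod f).symm

theorem Split.predDom_get (hsplit : sp.sortPart = id) (P : Sg.Pred)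
    (i : Fin (Sg.predDom P).length) : (Sg.predDom P).get i = sp.predPart P := by
  simpa [hsplit] using sp.pred_dom P i

theorem Split.funcCod_eq (hsplit : sp.sortPart = id) (f : Sg.Func) :
    Sg.funcCod f = sp.funcPart f := by
  simpa [hsplit] using sp.func_cod f

/-- Predicates are selected by their part as well, so that a nullary predicate belongs to
exactly one of these languages. -/
def partLang (s : Sg.Sorts) : FirstOrder.Language.{0, 0} where
  Functions n := {f : Sg.Func // (Sg.funcDom f).length = n ∧
    (∀ i, (Sg.funcDom f).get i = s) ∧ Sg.funcCod f = s}
  Relations n := {P : Sg.Pred // (Sg.predDom P).length = n ∧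
    (∀ i, (Sg.predDom P).get i = s) ∧ sp.predPart P = s}

instance partStructure (A : Structure Sg) (s : Sg.Sorts) :
    (partLang sp s).Structure (A.dom s) where
  funMap f x := dcast f.2.2.2
    (A.interpFunc f.1 fun i => dcast (f.2.2.1 i).symm (x (Fin.cast f.2.1 i)))
  RelMap P x := A.interpPred P.1 fun i => dcast (P.2.2.1 i).symm (x (Fin.cast P.2.1 i))

theorem card_partLang_le (hsplit : sp.sortPart = id) (s : Sg.Sorts) :
    (partLang sp s).card ≤ sp.partCard s := by
  have hF : #(Σ n, (partLang sp s).Functions n) ≤ #{f : Sg.Func // sp.funcPart f = s} :=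
    mk_le_of_injective (f := fun f => ⟨f.2.1, (sp.funcCod_eq hsplit _).symm.trans f.2.2.2.2⟩)
      fun ⟨_, _, hf, _⟩ ⟨_, _, hg, _⟩ h => by
        cases hf; cases hg; cases congrArg Subtype.val h; rfl
  have hR : #(Σ n, (partLang sp s).Relations n) ≤ #{P : Sg.Pred // sp.predPart P = s} :=
    mk_le_of_injective (f := fun P => ⟨P.2.1, P.2.2.2.2⟩)
      fun ⟨_, _, hP, _⟩ ⟨_, _, hQ, _⟩ h => by
        cases hP; cases hQ; cases congrArg Subtype.val h; rfl
  calc (partLang sp s).card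
      = #(Σ n, (partLang sp s).Functions n) + #(Σ n, (partLang sp s).Relations n) := by
        simp [FirstOrder.Language.card, FirstOrder.Language.Symbols]
    _ ≤ #{f : Sg.Func // sp.funcPart f = s} + #{P : Sg.Pred // sp.predPart P = s} :=
        add_le_add hF hR
    _ ≤ sp.partCard s := by
        rw [Split.partCard, add_assoc]
        exact le_add_self

-- Only terms of sort `s` and formulas in part `s` are translated faithfully; the other
-- branches are junk.
open Classical in
noncomputable def Term.toPartLang (s : Sg.Sorts) :
    ∀ {t : Sg.Sorts}, Term Sg t → (partLang sp s).Term ℕ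
  | _, .var _ n => .var n
  | _, .app f args =>
    if h : (∀ i, (Sg.funcDom f).get i = s) ∧ Sg.funcCod f = s then
      .func (⟨f, rfl, h⟩ : (partLang sp s).Functions _) fun i => toPartLang s (args i)
    else .var 0

open Classical in
noncomputable def Formula.toPartLang (s : Sg.Sorts) : Formula Sg → (partLang sp s).Formula ℕ
  | .eq (s := t) a b => if t = s then (a.toPartLang sp s).equal (b.toPartLang sp s) else ⊥
  | .pred P args =>
    if h : (∀ i, (Sg.predDom P).get i = s) ∧ sp.predPart P = s then
      Language.Relations.formula (⟨P, rfl, h⟩ : (partLang sp s).Relations _)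
        fun i => (args i).toPartLang sp s
    else ⊥
  | .falsum => ⊥
  | .imp φ ψ => (toPartLang s φ).imp (toPartLang s ψ)
  | .all t n φ =>
    if t = s then
      ((toPartLang s φ).relabel fun m => if m = n then .inr () else .inl m).iAlls Unit
    else toPartLang s φ

variable {sp}

theorem Term.realize_toPartLang (hsplit : sp.sortPart = id) {A : Structure Sg} (ν : Assign A)
    {s : Sg.Sorts} :
    ∀ {t : Sg.Sorts} (tm : Term Sg t) (h : t = s),
      (tm.toPartLang sp s).realize (ν s) = dcast h (tm.eval ν)
  | _, .var _ _, rfl => rfl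
  | _, .app f args, rfl => by
    have hdom := sp.funcDom_get hsplit f
    rw [toPartLang, dif_pos ⟨hdom, rfl⟩]
    refine congrArg (A.interpFunc f) (funext fun i => ?_)
    simp only [Fin.cast_eq_self]
    rw [realize_toPartLang hsplit ν (args i) (hdom i), dcast_dcast]

theorem Formula.realize_toPartLang (hsplit : sp.sortPart = id) {A : Structure Sg} {s : Sg.Sorts} :
    ∀ {ψ : Formula Sg} (_ : ψ.inPart sp s) (ν : Assign A),
      (ψ.toPartLang sp s).Realize (ν s) ↔ Sat A ν ψ
  | .eq (s := t) a b, ⟨ht, _⟩, ν => by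
    obtain rfl : t = s := by simpa [hsplit] using ht
    simp [toPartLang, Term.realize_toPartLang hsplit ν _ rfl, Sat]
  | .pred P args, ⟨hP, _⟩, ν => by
    have hdom : ∀ i, (Sg.predDom P).get i = s := fun i => (sp.predDom_get hsplit P i).trans hP
    rw [toPartLang, dif_pos ⟨hdom, hP⟩]
    refine Language.Formula.realize_rel.trans ?_
    refine iff_of_eq (congrArg (A.interpPred P) (funext fun i => ?_))
    simp only [Fin.cast_eq_self]
    rw [Term.realize_toPartLang hsplit ν (args i) (hdom i), dcast_dcast]
  | .falsum, _, _ => Iff.rfl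
  | .imp _ _, ⟨hφ, hψ⟩, ν => by
    rw [toPartLang, Language.Formula.realize_imp, realize_toPartLang hsplit hφ,
      realize_toPartLang hsplit hψ]
    rfl
  | .all t n φ, ⟨ht, hφ⟩, ν => by
    obtain rfl : t = s := by simpa [hsplit] using ht
    have hupd : ∀ a : Unit → A.dom t,
        (fun m => Sum.elim (ν t) a (if m = n then .inr () else .inl m)) = ν.update t n (a ()) t :=
      fun a => funext fun m => by by_cases hm : m = n <;> simp [hm, Assign.update_apply_same]
    rw [toPartLang, if_pos rfl, Language.Formula.realize_iAlls]
    simp only [Language.Formula.realize_relabel, Function.comp_def, hupd,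
      realize_toPartLang hsplit hφ]
    exact ⟨fun h a => h fun _ => a, fun h a => h (a ())⟩

theorem forall_sat_iff_forall_realize_toPartLang (hsplit : sp.sortPart = id)
    {A : Structure Sg} {ψ : Formula Sg} {s : Sg.Sorts} (hψ : ψ.inPart sp s) :
    (∀ ν : Assign A, Sat A ν ψ) ↔ ∀ v : ℕ → A.dom s, (ψ.toPartLang sp s).Realize v := by
  classical
  refine ⟨fun h v => ?_, fun h ν => (ψ.realize_toPartLang hsplit hψ ν).1 (h _)⟩
  obtain ⟨ν⟩ : Nonempty (Assign A) := inferInstance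
  have hv : (Function.update ν s v : Assign A) s = v := Function.update_self ..
  rw [← hv]
  exact (ψ.realize_toPartLang hsplit hψ _).2 (h _)

theorem elemEquiv_of_elementarilyEquivalent (hsplit : sp.sortPart = id) {A B : Structure Sg}
    (h : ∀ s, A.dom s ≅[partLang sp s] B.dom s) : ElemEquiv A B :=
  elemEquiv_of_forall_inPart sp fun s ψ hψ _ => by
    have := A.dom_nonempty s
    have := B.dom_nonempty s
    rw [forall_sat_iff_forall_realize_toPartLang hsplit hψ,
      forall_sat_iff_forall_realize_toPartLang hsplit hψ]
    exact (h s).forall_realize_formula_iff _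

variable (sp) in
def Structure.ofParts (hsplit : sp.sortPart = id) (D : Sg.Sorts → Type) [∀ s, Nonempty (D s)]
    [∀ s, (partLang sp s).Structure (D s)] : Structure Sg where
  dom := D
  dom_nonempty := inferInstance
  interpFunc f args :=
    Language.Structure.funMap (L := partLang sp (Sg.funcCod f))
      ⟨f, rfl, sp.funcDom_get hsplit f, rfl⟩ fun i => dcast (sp.funcDom_get hsplit f i) (args i)
  interpPred P args :=
    Language.Structure.RelMap (L := partLang sp (sp.predPart P))
      ⟨P, rfl, sp.predDom_get hsplit P, rfl⟩ fun i => dcast (sp.predDom_get hsplit P i) (args i)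

theorem partStructure_ofParts (hsplit : sp.sortPart = id) (D : Sg.Sorts → Type)
    [∀ s, Nonempty (D s)] [str : ∀ s, (partLang sp s).Structure (D s)] (s : Sg.Sorts) :
    partStructure sp (Structure.ofParts sp hsplit D) s = str s := by
  ext1
  · funext n f x
    obtain ⟨f, rfl, -, rfl⟩ := f
    exact congrArg (Language.Structure.funMap (M := D _) _) (funext fun i => dcast_dcast _ _ _)
  · funext n P x
    obtain ⟨P, rfl, -, rfl⟩ := P
    exact congrArg (Language.Structure.RelMap (M := D _) _) (funext fun i => dcast_dcast _ _ _)

theorem exists_elemEquiv_card_eq (hsplit : sp.sortPart = id) (A : Structure Sg)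
    (hA : ∀ s, Infinite (A.dom s)) (κ : Sg.Sorts → Cardinal) (hκ : ∀ s, sp.partCard s ≤ κ s)
    (hκ₀ : ∀ s, ℵ₀ ≤ κ s) : ∃ B : Structure Sg, (∀ s, #(B.dom s) = κ s) ∧ ElemEquiv A B := by
  have hLS : ∀ s, ∃ N : CategoryTheory.Bundled (partLang sp s).Structure,
      (A.dom s ≅[partLang sp s] N) ∧ #N = κ s := fun s =>
    have := hA s
    Language.exists_elementarilyEquivalent_card_eq _ _ (κ s) (hκ₀ s)
      (by simpa using (card_partLang_le sp hsplit s).trans (hκ s))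
  choose N hAN hN using hLS
  have : ∀ s, Nonempty (N s) := fun s =>
    mk_ne_zero_iff.1 ((hN s).trans_ne (aleph0_pos.trans_le (hκ₀ s)).ne')
  refine ⟨Structure.ofParts sp hsplit fun s => N s, hN, ?_⟩
  refine elemEquiv_of_elementarilyEquivalent hsplit fun s => ?_
  rw [partStructure_ofParts]
  exact hAN s

end OneSorted

end MS

/-- Many-sorted Łoś–Vaught test for completely split signatures: if `Σ` is
completely split (the parts of the splitting are exactly the single sorts), every
model of `T` interprets every sort as an infinite set, and `T` is `κ`-categorical
for some cardinal function with `κ(σ) ≥ |Σ_σ|` for every sort `σ`, then `T` is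
complete. -/
theorem many_sorted_los_vaught {Sg : MSSignature}
    (sp : Split Sg Sg.Sorts) (hsplit : sp.sortPart = id)
    (T : Set (Formula Sg)) (hsent : ∀ φ ∈ T, Formula.IsSentence φ)
    (hinf : ∀ A : Structure Sg, Models A T → ∀ s : Sg.Sorts, Infinite (A.dom s))
    (κ : Sg.Sorts → Cardinal) (hκ : ∀ s : Sg.Sorts, sp.partCard s ≤ κ s)
    (hcat : Categorical T κ) :
    Complete T := by
  obtain ⟨⟨A₀, hA₀, hA₀κ⟩, hiso⟩ := hcat
  have hκ₀ : ∀ s, ℵ₀ ≤ κ s := fun s => by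
    have := hinf A₀ hA₀ s
    exact hA₀κ s ▸ aleph0_le_mk _
  have hresize : ∀ A, Models A T →
      ∃ A', Models A' T ∧ (∀ s, #(A'.dom s) = κ s) ∧ ElemEquiv A A' := fun A hA => by
    obtain ⟨A', hA'κ, hAA'⟩ := exists_elemEquiv_card_eq hsplit A (hinf A hA) κ hκ hκ₀
    exact ⟨A', (hAA'.models_iff hsent).1 hA, hA'κ, hAA'⟩
  refine complete_of_forall_elemEquiv fun A B hA hB => ?_
  obtain ⟨A', hA', hA'κ, hAA'⟩ := hresize A hA
  obtain ⟨B', hB', hB'κ, hBB'⟩ := hresize B hB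
  exact hAA'.trans ((hiso A' B' hA' hB' hA'κ hB'κ).some.elemEquiv.trans hBB'.symm)
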